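/- arXiv:1603.07825 — 2 statements merged into one kernel-verified Lean document; each statement's English description precedes it below -/
import Mathlib

section
/- Define H(β) = 1 - β - Π_{j ∈ d} (1 - (m_j/m) β) for positive reals m_j ≤ m and a finite index set d with |d| ≥ 2. Then H(0) = 0 = H(1) fails in general, but H(0) = 0, and if Σ_{j ∈ d} m_j > m (i.e., H'(0) > 0), then H has a unique root in the open interval (0, 1]. -/
/-!
Put `c j = mj j / m ∈ (0, 1]`. On `[0, 1)` the product `∏ j, (1 - c j * β)` has at least two
positive, strictly decreasing factors, so its derivative `-∑ j, c j * ∏ k ≠ j, (1 - c k * β)` is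
strictly increasing and the product is strictly convex on `[0, 1]`; hence `H` is strictly concave
there. A strictly concave function vanishing at `0` has at most one zero to the right of `0`.
A zero in `(0, 1]` exists by the intermediate value theorem: `H'(0) = ∑ j, c j - 1 > 0` makes `H`
positive just right of `0`, while `H 1 = -∏ j, (1 - c j) ≤ 0`.
-/

open Set Filter Topology

theorem HasDerivAt.eventually_nhdsGT_lt {f : ℝ → ℝ} {f' x : ℝ} (hf : HasDerivAt f f' x)
    (hf' : 0 < f') : ∀ᶠ y in 𝓝[>] x, f x < f y := by
  filter_upwards [nhdsGT_le_nhdsNE x ((hasDerivAt_iff_tendsto_slope.mp hf).eventually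
    (eventually_gt_nhds hf')), self_mem_nhdsWithin] with y hslope hxy
  exact (slope_pos_iff_of_le (le_of_lt hxy)).mp hslope

theorem StrictConcaveOn.eq_of_apply_eq_of_lt {s : Set ℝ} {f : ℝ → ℝ}
    (hf : StrictConcaveOn ℝ s f) {x a b : ℝ} (hx : x ∈ s) (ha : a ∈ s) (hb : b ∈ s)
    (hxa : x < a) (hxb : x < b) (hfa : f a = f x) (hfb : f b = f x) : a = b := by
  by_contra hab
  wlog hlt : a < b generalizing a b
  · exact this hb ha hxb hxa hfb hfa (Ne.symm hab) ((not_lt.mp hlt).lt_of_ne (Ne.symm hab))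
  have := hf.lt_on_openSegment hx hb hxb.ne
    (by rw [openSegment_eq_Ioo (hxa.trans hlt)]; exact ⟨hxa, hlt⟩)
  simp [hfa, hfb] at this

section ProdOneSubMul

open Finset

variable {ι : Type*} [DecidableEq ι] (s : Finset ι) (c : ι → ℝ)

theorem hasDerivAt_prod_one_sub_mul (x : ℝ) :
    HasDerivAt (fun x => ∏ j ∈ s, (1 - c j * x))
      (-∑ j ∈ s, c j * ∏ k ∈ s.erase j, (1 - c k * x)) x := by
  refine (HasDerivAt.fun_finsetProd (u := s) (x := x)
    fun j _ => ((hasDerivAt_id x).const_mul (c j)).const_sub 1).congr_deriv ?_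
  simp [mul_comm]

theorem one_sub_mul_pos {c x : ℝ} (hc₀ : 0 ≤ c) (hc₁ : c ≤ 1) (hx : x < 1) : 0 < 1 - c * x := by
  rcases le_or_gt x 0 with hx₀ | hx₀ <;> nlinarith

variable {s c}

theorem strictAntiOn_sum_mul_prod_erase_one_sub_mul (hs : 2 ≤ #s)
    (hc : ∀ j ∈ s, 0 < c j ∧ c j ≤ 1) :
    StrictAntiOn (fun x => ∑ j ∈ s, c j * ∏ k ∈ s.erase j, (1 - c k * x)) (Iio 1) := by
  intro x hx y hy hxy
  have hs₀ : s.Nonempty := card_pos.mp (by omega)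
  refine sum_lt_sum_of_nonempty hs₀ fun j hj => mul_lt_mul_of_pos_left ?_ (hc j hj).1
  have hne : (s.erase j).Nonempty := by
    rw [← card_pos, card_erase_of_mem hj]; omega
  refine prod_lt_prod_of_nonempty (fun k hk => ?_) (fun k hk => ?_) hne
  · obtain ⟨hck₀, hck₁⟩ := hc k (mem_of_mem_erase hk)
    exact one_sub_mul_pos hck₀.le hck₁ hy
  · have := (hc k (mem_of_mem_erase hk)).1
    nlinarith

theorem strictConvexOn_prod_one_sub_mul (hs : 2 ≤ #s) (hc : ∀ j ∈ s, 0 < c j ∧ c j ≤ 1) :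
    StrictConvexOn ℝ (Icc 0 1) (fun x => ∏ j ∈ s, (1 - c j * x)) := by
  refine StrictMonoOn.strictConvexOn_of_deriv (convex_Icc 0 1) (by fun_prop) ?_
  rw [interior_Icc]
  intro x hx y hy hxy
  rw [(hasDerivAt_prod_one_sub_mul s c x).deriv, (hasDerivAt_prod_one_sub_mul s c y).deriv,
    neg_lt_neg_iff]
  exact strictAntiOn_sum_mul_prod_erase_one_sub_mul hs hc hx.2 hy.2 hxy

end ProdOneSubMul

/-- For `H(β) = 1 - β - Π_{j∈d} (1 - (m_j/m) β)` with `0 < m_j ≤ m`, `|d| ≥ 2`: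
`H(0) = 0`, and if `Σ_j m_j > m` (i.e. `H'(0) > 0`), then `H` has a unique root
in the open-closed interval `(0, 1]`. -/
theorem likelihood_poly_unique_root {ι : Type*} (d : Finset ι) (hd : 2 ≤ d.card)
    (m : ℝ) (hm : 0 < m) (mj : ι → ℝ) (hmj : ∀ j ∈ d, 0 < mj j ∧ mj j ≤ m)
    (hsum : m < ∑ j ∈ d, mj j) :
    let H : ℝ → ℝ := fun β => 1 - β - ∏ j ∈ d, (1 - (mj j / m) * β)
    H 0 = 0 ∧ ∃! β, β ∈ Set.Ioc (0:ℝ) 1 ∧ H β = 0 := by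
  classical
  intro H
  set c : ι → ℝ := fun j => mj j / m
  have hc : ∀ j ∈ d, 0 < c j ∧ c j ≤ 1 := fun j hj =>
    ⟨div_pos (hmj j hj).1 hm, (div_le_one hm).mpr (hmj j hj).2⟩
  have hH0 : H 0 = 0 := by simp [H]
  have hH1 : H 1 ≤ 0 := by
    have : 0 ≤ ∏ j ∈ d, (1 - c j * 1) := Finset.prod_nonneg fun j hj => by linarith [(hc j hj).2]
    simp only [H, c] at this ⊢
    linarith
  have hslope : 0 < ∑ j ∈ d, c j - 1 := by
    rw [sub_pos, ← Finset.sum_div]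
    exact (one_lt_div hm).mpr hsum
  have hderiv : HasDerivAt H (∑ j ∈ d, c j - 1) 0 := by
    refine (((hasDerivAt_id 0).const_sub 1).sub
      (hasDerivAt_prod_one_sub_mul d c 0)).congr_deriv ?_
    simp [neg_add_eq_sub]
  obtain ⟨δ, hδH, hδ⟩ := ((hderiv.eventually_nhdsGT_lt hslope).and
    (Ioo_mem_nhdsGT zero_lt_one)).exists
  obtain ⟨β, hβ, hHβ⟩ : (0 : ℝ) ∈ H '' Icc δ 1 :=
    intermediate_value_Icc' hδ.2.le (by fun_prop) ⟨hH1, hH0 ▸ hδH.le⟩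
  have hconc : StrictConcaveOn ℝ (Icc 0 1) H :=
    ((concaveOn_const 1 (convex_Icc 0 1)).sub (convexOn_id (convex_Icc 0 1))).sub_strictConvexOn
      (strictConvexOn_prod_one_sub_mul hd hc)
  have hβ₀ : β ∈ Ioc 0 1 := ⟨hδ.1.trans_le hβ.1, hβ.2⟩
  refine ⟨hH0, β, ⟨hβ₀, hHβ⟩, fun b ⟨hb, hHb⟩ => ?_⟩
  exact hconc.eq_of_apply_eq_of_lt (left_mem_Icc.mpr zero_le_one) (Ioc_subset_Icc_self hb)
    (Ioc_subset_Icc_self hβ₀) hb.1 hβ₀.1 (hHb.trans hH0.symm) (hHβ.trans hH0.symm)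
end

section
/- Let H(β) = 1 - β - Π_{j∈d}(1 - c_j β) with finite d, |d| ≥ 2, and 0 < c_j ≤ 1 for all j. Then H(0) = 0, and if Σ_{j∈d} c_j > 1, then H is positive on an interval (0, ε) for some ε > 0 and H(1) = -Π_{j∈d}(1 - c_j) ≤ 0, so by the intermediate value theorem H has a root in (0, 1]. -/
/-! Since `H(0) = 0` and `H'(0) = Σ_j c_j - 1 > 0`, `H` is positive just to the right of `0`,
while `H(1) ≤ 0`; the intermediate value theorem on `[β₀, 1]`, for any small `β₀ > 0`, gives a
root in `(0, 1]`. -/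

open Filter Set Topology

theorem hasDerivAt_prod_one_sub_mul_zero {ι : Type*} (s : Finset ι) (c : ι → ℝ) :
    HasDerivAt (fun β : ℝ => ∏ j ∈ s, (1 - c j * β)) (-∑ j ∈ s, c j) 0 := by
  classical
  have h := HasDerivAt.fun_finsetProd (u := s) (x := (0 : ℝ))
    (f := fun j β => 1 - c j * β) (f' := fun j => -c j) fun j _ => by
      simpa using ((hasDerivAt_id (0 : ℝ)).const_mul (c j)).const_sub 1
  simpa using h

theorem eventually_pos_nhdsGT_of_hasDerivAt_pos {f : ℝ → ℝ} {f' x₀ : ℝ}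
    (hf : HasDerivAt f f' x₀) (hf' : 0 < f') (hx₀ : f x₀ = 0) :
    ∀ᶠ x in 𝓝[>] x₀, 0 < f x := by
  have hslope : ∀ᶠ x in 𝓝[>] x₀, 0 < slope f x₀ x :=
    (hf.tendsto_slope.mono_left (nhdsGT_le_nhdsNE x₀)).eventually (eventually_gt_nhds hf')
  filter_upwards [hslope, self_mem_nhdsWithin] with x hx hlt
  exact pos_of_slope_pos hlt hx hx₀

theorem exists_mem_Ioc_eq_zero_of_eventually_pos {f : ℝ → ℝ} {a b : ℝ} (hab : a < b)
    (hf : ContinuousOn f (Icc a b)) (hpos : ∀ᶠ x in 𝓝[>] a, 0 < f x) (hb : f b ≤ 0) :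
    ∃ x ∈ Ioc a b, f x = 0 := by
  obtain ⟨x₀, hfx₀, hx₀⟩ := (hpos.and (Ioo_mem_nhdsGT hab)).exists
  obtain ⟨x, hx, hfx⟩ := intermediate_value_Icc' hx₀.2.le (hf.mono (Icc_subset_Icc_left hx₀.1.le))
    ⟨hb, hfx₀.le⟩
  exact ⟨x, ⟨hx₀.1.trans_le hx.1, hx.2⟩, hfx⟩

theorem likelihood_poly_root_exists_general {ι : Type*} (d : Finset ι)
    (c : ι → ℝ) (hc : ∀ j ∈ d, 0 < c j ∧ c j ≤ 1) (hsum : 1 < ∑ j ∈ d, c j) :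
    let H : ℝ → ℝ := fun β => 1 - β - ∏ j ∈ d, (1 - c j * β)
    H 0 = 0 ∧
    (∃ ε > 0, ∀ β ∈ Set.Ioo (0:ℝ) ε, 0 < H β) ∧
    H 1 = -∏ j ∈ d, (1 - c j) ∧ H 1 ≤ 0 ∧
    ∃ β ∈ Set.Ioc (0:ℝ) 1, H β = 0 := by
  intro H
  have h0 : H 0 = 0 := by simp [H]
  have hderiv : HasDerivAt H (∑ j ∈ d, c j - 1) 0 :=
    (((hasDerivAt_id (0 : ℝ)).const_sub 1).fun_sub
      (hasDerivAt_prod_one_sub_mul_zero d c)).congr_deriv (by ring)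
  have hpos := eventually_pos_nhdsGT_of_hasDerivAt_pos hderiv (by linarith) h0
  have h1 : H 1 = -∏ j ∈ d, (1 - c j) := by simp [H]
  have h1_nonpos : H 1 ≤ 0 := by
    rw [h1, neg_nonpos]
    exact Finset.prod_nonneg fun j hj => sub_nonneg.mpr (hc j hj).2
  have hcont : Continuous H := by fun_prop
  obtain ⟨ε, hε, hIoo⟩ := mem_nhdsGT_iff_exists_Ioo_subset.mp hpos
  exact ⟨h0, ⟨ε, hε, hIoo⟩, h1, h1_nonpos,
    exists_mem_Ioc_eq_zero_of_eventually_pos one_pos hcont.continuousOn hpos h1_nonpos⟩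

/-- For `H(β) = 1 - β - Π_{j∈d}(1 - c_j β)` with `|d| ≥ 2` and `0 < c_j ≤ 1`:
`H(0) = 0`; if `Σ_j c_j > 1` then `H > 0` on some interval `(0, ε)`,
`H(1) = -Π_j (1-c_j) ≤ 0`, and hence `H` has a root in `(0, 1]`. -/
theorem likelihood_poly_root_exists {ι : Type*} (d : Finset ι) (hd : 2 ≤ d.card)
    (c : ι → ℝ) (hc : ∀ j ∈ d, 0 < c j ∧ c j ≤ 1) (hsum : 1 < ∑ j ∈ d, c j) :
    let H : ℝ → ℝ := fun β => 1 - β - ∏ j ∈ d, (1 - c j * β)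
    H 0 = 0 ∧
    (∃ ε > 0, ∀ β ∈ Set.Ioo (0:ℝ) ε, 0 < H β) ∧
    H 1 = -∏ j ∈ d, (1 - c j) ∧ H 1 ≤ 0 ∧
    ∃ β ∈ Set.Ioc (0:ℝ) 1, H β = 0 :=
  likelihood_poly_root_exists_general d c hc hsum
end
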